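/- Let R be a nilpotent based ring. Then for every basic element X of R, the ratio FPdim(R_ad)/FPdim(X)² is an integer, where FPdim(R_ad) = Σ FPdim(Y)² with the sum over basic elements Y lying in R_ad. (Categorically: in a nilpotent fusion category C, the square of the Frobenius–Perron dimension of any simple object divides FPdim(C_ad).) -/

import Mathlib

/-- A *based ring* (fusion ring). -/
structure BasedRing (ι R : Type*) [Fintype ι] [DecidableEq ι] [Ring R] where
  b : Module.Basis ι ℤ R
  unit : ι
  b_unit : b unit = 1
  star : ι → ι
  star_invol : ∀ i, star (star i) = i
  c_nonneg : ∀ i j k, 0 ≤ b.repr (b i * b j) k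
  adj_right : ∀ i j k, b.repr (b i * b j) k = b.repr (b k * b (star j)) i
  adj_left : ∀ i j k, b.repr (b i * b j) k = b.repr (b (star i) * b k) j

namespace BasedRing

variable {ι R : Type*} [Fintype ι] [DecidableEq ι] [Ring R] (BR : BasedRing ι R)

/-- `x` (with nonnegative coordinates) *contains* the basic element `k`. -/
def contains (x : R) (k : ι) : Prop := 0 < BR.b.repr x k

open Classical in
/-- The adjoint subring of the based subring spanned by `C`: the basic elements
contained in some power (`n ≥ 1`) of `Σ_{X basic in S} X X*`.  For
`C = Finset.univ` this gives the basic elements of `R_ad`. -/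
noncomputable def adOf (C : Finset ι) : Finset ι :=
  Finset.univ.filter fun k => ∃ n : ℕ, 1 ≤ n ∧
    BR.contains ((∑ i ∈ C, BR.b i * BR.b (BR.star i)) ^ n) k

/-- The upper central series: `R^(0) = R`, `R^(n) = (R^(n-1))_ad`
(for `C = Finset.univ`). -/
noncomputable def upperOf (C : Finset ι) : ℕ → Finset ι
  | 0 => C
  | n + 1 => BR.adOf (upperOf C n)

end BasedRing

/-!
Call a set `C` of basic elements a based subring if it contains `1` and is closed under
`i ↦ i*` and under taking constituents of products. The key fact is that, on supports, `C_ad`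
commutes with `C`: `X_a X_c ⊆ X_c · C_ad` for `a ∈ C_ad`, `c ∈ C`. Hence right multiplication
by `X_c` maps the right coset `X_j · C_ad` into the coset of any `j'` occurring in `X_j X_c`, and
`X_{c*}` maps it back. Counting `Σ FPdim(X_m) N_{mc}^{m'} FPdim(X_{m'})` in two ways then shows
that all cosets of `C_ad` inside one coset of `C` have the same mass `Σ FPdim²`, so the mass of a
coset of `C` is an integer multiple of the mass of a coset of `C_ad`. Descending the upper
central series to `{1}`, where the coset of `j` is `{j}`, shows that `X_j · R_ad` has mass
divisible by `FPdim(X_j)²`. Finally `R_ad` is the coset of `1`, which has the same mass as the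
coset of `i`.
-/
lemma Fintype.sum_mul_pos_iff_of_nonneg {ι α : Type*} [Fintype ι] [Semiring α] [LinearOrder α]
    [IsStrictOrderedRing α] {f g : ι → α} (hf : ∀ i, 0 ≤ f i) (hg : ∀ i, 0 ≤ g i) :
    0 < ∑ i, f i * g i ↔ ∃ i, 0 < f i ∧ 0 < g i := by
  rw [Finset.sum_pos_iff_of_nonneg fun i _ => mul_nonneg (hf i) (hg i)]
  simp only [Finset.mem_univ, true_and]
  refine exists_congr fun i => ⟨fun h => ?_, fun h => mul_pos h.1 h.2⟩
  exact ⟨pos_of_mul_pos_left h (hg i), pos_of_mul_pos_right h (hf i)⟩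

namespace BasedRing

open Finset

variable {ι R : Type*} [Fintype ι] [DecidableEq ι] [Ring R] (BR : BasedRing ι R)

noncomputable def N (i j k : ι) : ℤ := BR.b.repr (BR.b i * BR.b j) k

lemma N_nonneg (i j k : ι) : 0 ≤ BR.N i j k := BR.c_nonneg i j k

lemma N_frobenius_right (i j k : ι) : BR.N i j k = BR.N k (BR.star j) i := BR.adj_right i j k

lemma N_frobenius_left (i j k : ι) : BR.N i j k = BR.N (BR.star i) k j := BR.adj_left i j k

lemma N_star (i j k : ι) : BR.N i j k = BR.N (BR.star j) (BR.star i) (BR.star k) := by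
  rw [N_frobenius_right, N_frobenius_left, N_frobenius_right]

lemma N_unit_left (j k : ι) : BR.N BR.unit j k = if j = k then 1 else 0 := by
  simp [N, BR.b_unit, Finsupp.single_apply]

lemma N_unit_right (j k : ι) : BR.N j BR.unit k = if j = k then 1 else 0 := by
  simp [N, BR.b_unit, Finsupp.single_apply]

lemma N_unit_left_pos_iff {j k : ι} : 0 < BR.N BR.unit j k ↔ j = k := by
  rw [N_unit_left]; split_ifs <;> simp_all

lemma N_unit_right_pos_iff {j k : ι} : 0 < BR.N j BR.unit k ↔ j = k := by
  rw [N_unit_right]; split_ifs <;> simp_all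

lemma N_star_unit (i : ι) : BR.N i (BR.star i) BR.unit = 1 := by
  rw [N_frobenius_right, BR.star_invol, N_unit_left, if_pos rfl]

lemma star_unit : BR.star BR.unit = BR.unit :=
  BR.N_unit_left_pos_iff.1 (by rw [N_star_unit]; exact one_pos)

lemma repr_mul (x y : R) (k : ι) :
    BR.b.repr (x * y) k = ∑ i, BR.b.repr x i * ∑ j, BR.b.repr y j * BR.N i j k := by
  conv_lhs => rw [← BR.b.sum_repr x, ← BR.b.sum_repr y]
  simp only [sum_mul, mul_sum, smul_mul_smul_comm, map_sum, map_zsmul, Finsupp.coe_finsetSum,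
    Finset.sum_apply, Finsupp.smul_apply, smul_eq_mul, N, mul_assoc]
  exact sum_comm

lemma sum_N_mul_N_assoc (i j l k : ι) :
    ∑ m, BR.N i j m * BR.N m l k = ∑ n, BR.N j l n * BR.N i n k := by
  have h := congrArg (fun x => BR.b.repr x k) (mul_assoc (BR.b i) (BR.b j) (BR.b l))
  simp only [repr_mul BR _ _ k] at h
  simpa [Finsupp.single_apply, mul_comm, N] using h

lemma exists_N_pos_assoc {i j l k : ι} :
    (∃ m, 0 < BR.N i j m ∧ 0 < BR.N m l k) ↔ ∃ n, 0 < BR.N j l n ∧ 0 < BR.N i n k := by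
  have nonneg := BR.N_nonneg
  rw [← Fintype.sum_mul_pos_iff_of_nonneg (fun _ => nonneg ..) (fun _ => nonneg ..),
    sum_N_mul_N_assoc, Fintype.sum_mul_pos_iff_of_nonneg (fun _ => nonneg ..) (fun _ => nonneg ..)]

def nonneg : Subsemiring R where
  carrier := {x | ∀ k, 0 ≤ BR.b.repr x k}
  mul_mem' {x y} hx hy k := by
    rw [repr_mul]
    exact sum_nonneg fun i _ => mul_nonneg (hx i)
      (sum_nonneg fun j _ => mul_nonneg (hy j) (BR.N_nonneg i j k))
  one_mem' k := by
    rw [← BR.b_unit, Module.Basis.repr_self, Finsupp.single_apply]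
    split_ifs <;> norm_num
  add_mem' hx hy k := by
    rw [map_add, Finsupp.add_apply]
    exact add_nonneg (hx k) (hy k)
  zero_mem' k := by simp

lemma b_mem_nonneg (i : ι) : BR.b i ∈ BR.nonneg := fun k => by
  rw [Module.Basis.repr_self, Finsupp.single_apply]
  split_ifs <;> norm_num

lemma contains_sum_iff {α : Type*} {s : Finset α} {g : α → R}
    (hg : ∀ a ∈ s, g a ∈ BR.nonneg) {k : ι} :
    BR.contains (∑ a ∈ s, g a) k ↔ ∃ a ∈ s, BR.contains (g a) k := by
  simp only [contains, map_sum, Finsupp.coe_finsetSum, Finset.sum_apply]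
  exact sum_pos_iff_of_nonneg fun a ha => hg a ha k

lemma contains_mul_iff {x y : R} (hx : x ∈ BR.nonneg) (hy : y ∈ BR.nonneg) {k : ι} :
    BR.contains (x * y) k ↔
      ∃ i, BR.contains x i ∧ ∃ j, BR.contains y j ∧ 0 < BR.N i j k := by
  have hsum : ∀ i, 0 ≤ ∑ j, BR.b.repr y j * BR.N i j k := fun i =>
    sum_nonneg fun j _ => mul_nonneg (hy j) (BR.N_nonneg i j k)
  simp only [contains, repr_mul, Fintype.sum_mul_pos_iff_of_nonneg hx hsum,
    Fintype.sum_mul_pos_iff_of_nonneg hy fun j => BR.N_nonneg _ j k]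

structure IsBasedSubring (C : Finset ι) : Prop where
  unit_mem : BR.unit ∈ C
  star_mem {c : ι} : c ∈ C → BR.star c ∈ C
  mul_mem {a b k : ι} : a ∈ C → b ∈ C → 0 < BR.N a b k → k ∈ C

lemma isBasedSubring_univ : BR.IsBasedSubring univ :=
  ⟨mem_univ _, fun _ => mem_univ _, fun _ _ _ => mem_univ _⟩

open Classical in
noncomputable def coset (A : Finset ι) (j : ι) : Finset ι :=
  univ.filter fun k => ∃ a ∈ A, 0 < BR.N j a k

lemma upperOf_succ' (C : Finset ι) (n : ℕ) :
    BR.upperOf C (n + 1) = BR.upperOf (BR.adOf C) n := by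
  induction n with
  | zero => rfl
  | succ n ih => exact congrArg BR.adOf ih

section adOf

variable {BR} {C : Finset ι}

lemma mem_adOf_iff {k : ι} : k ∈ BR.adOf C ↔
    ∃ n, 1 ≤ n ∧ BR.contains ((∑ i ∈ C, BR.b i * BR.b (BR.star i)) ^ n) k := by
  simp only [adOf, mem_filter, mem_univ, true_and]

lemma sum_mul_star_mem_nonneg (C : Finset ι) :
    ∑ i ∈ C, BR.b i * BR.b (BR.star i) ∈ BR.nonneg :=
  sum_mem fun i _ => mul_mem (BR.b_mem_nonneg i) (BR.b_mem_nonneg _)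

lemma contains_sum_mul_star_iff {k : ι} :
    BR.contains (∑ i ∈ C, BR.b i * BR.b (BR.star i)) k ↔
      ∃ c ∈ C, 0 < BR.N c (BR.star c) k :=
  BR.contains_sum_iff fun i _ => mul_mem (BR.b_mem_nonneg i) (BR.b_mem_nonneg _)

lemma mem_adOf_of_N_pos {c k : ι} (hc : c ∈ C) (h : 0 < BR.N c (BR.star c) k) :
    k ∈ BR.adOf C :=
  mem_adOf_iff.2 ⟨1, le_rfl, by rw [pow_one, contains_sum_mul_star_iff]; exact ⟨c, hc, h⟩⟩

lemma mem_adOf_of_N_pos_of_mem {a b k : ι} (ha : a ∈ BR.adOf C) (hb : b ∈ BR.adOf C)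
    (h : 0 < BR.N a b k) : k ∈ BR.adOf C := by
  obtain ⟨n, hn, ha⟩ := mem_adOf_iff.1 ha
  obtain ⟨m, hm, hb⟩ := mem_adOf_iff.1 hb
  have hI := BR.sum_mul_star_mem_nonneg C
  refine mem_adOf_iff.2 ⟨n + m, by omega, ?_⟩
  rw [pow_add, BR.contains_mul_iff (pow_mem hI n) (pow_mem hI m)]
  exact ⟨a, ha, b, hb, h⟩

theorem adOf_induction {P : ι → Prop}
    (base : ∀ c ∈ C, ∀ k, 0 < BR.N c (BR.star c) k → P k)
    (mul : ∀ a b k, P a → P b → 0 < BR.N a b k → P k) {k : ι} (hk : k ∈ BR.adOf C) :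
    P k := by
  have hI := BR.sum_mul_star_mem_nonneg C
  have hbase : ∀ k, BR.contains (∑ i ∈ C, BR.b i * BR.b (BR.star i)) k → P k :=
    fun k hk => by
    obtain ⟨c, hc, h⟩ := contains_sum_mul_star_iff.1 hk
    exact base c hc k h
  obtain ⟨n, hn, hkn⟩ := mem_adOf_iff.1 hk
  clear hk
  induction n, hn using Nat.le_induction generalizing k with
  | base => exact hbase k (by rwa [pow_one] at hkn)
  | succ n _ ih =>
    rw [pow_succ, BR.contains_mul_iff (pow_mem hI n) hI] at hkn
    obtain ⟨a, ha, b, hb, h⟩ := hkn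
    exact mul a b k (ih ha) (hbase b hb) h

lemma unit_mem_adOf {c : ι} (hc : c ∈ C) : BR.unit ∈ BR.adOf C :=
  mem_adOf_of_N_pos hc (by rw [N_star_unit]; exact one_pos)

lemma star_mem_adOf {k : ι} (hk : k ∈ BR.adOf C) : BR.star k ∈ BR.adOf C := by
  refine adOf_induction (fun c hc k h => mem_adOf_of_N_pos hc ?_) (fun a b k ha hb h => ?_) hk
  · rwa [N_star, BR.star_invol] at h
  · rw [N_star] at h
    exact mem_adOf_of_N_pos_of_mem hb ha h

lemma adOf_subset (hC : BR.IsBasedSubring C) : BR.adOf C ⊆ C := fun _ =>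
  adOf_induction (fun _ hc _ h => hC.mul_mem hc (hC.star_mem hc) h)
    (fun _ _ _ ha hb h => hC.mul_mem ha hb h)

lemma IsBasedSubring.adOf (hC : BR.IsBasedSubring C) : BR.IsBasedSubring (BR.adOf C) :=
  ⟨unit_mem_adOf hC.unit_mem, star_mem_adOf, mem_adOf_of_N_pos_of_mem⟩

variable (BR) in
lemma adOf_singleton_unit : BR.adOf {BR.unit} = {BR.unit} := by
  have h : BR.IsBasedSubring {BR.unit} := by
    refine ⟨mem_singleton_self _, fun hc => ?_, fun ha hb h => ?_⟩
    · rw [mem_singleton.1 hc, star_unit, mem_singleton]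
    · rw [mem_singleton.1 ha, N_unit_left_pos_iff, mem_singleton.1 hb] at h
      exact mem_singleton.2 h.symm
  exact Subset.antisymm (adOf_subset h)
    (singleton_subset_iff.2 (unit_mem_adOf (mem_singleton_self _)))

end adOf

section coset

variable {BR} {A C : Finset ι}

lemma mem_coset {j k : ι} : k ∈ BR.coset A j ↔ ∃ a ∈ A, 0 < BR.N j a k := by
  simp only [coset, mem_filter, mem_univ, true_and]

lemma self_mem_coset (hA : BR.unit ∈ A) (j : ι) : j ∈ BR.coset A j :=
  mem_coset.2 ⟨_, hA, BR.N_unit_right_pos_iff.2 rfl⟩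

variable (BR) in
lemma coset_unit (A : Finset ι) : BR.coset A BR.unit = A := by
  ext k
  simp only [mem_coset, N_unit_left_pos_iff, exists_eq_right]

lemma coset_singleton_unit (j : ι) : BR.coset {BR.unit} j = {j} := by
  ext k
  simp only [mem_coset, mem_singleton, exists_eq_left, N_unit_right_pos_iff, eq_comm]

lemma mem_coset_of_N_pos (hA : BR.IsBasedSubring A) {j x a y : ι} (hx : x ∈ BR.coset A j)
    (ha : a ∈ A) (h : 0 < BR.N x a y) : y ∈ BR.coset A j := by
  obtain ⟨b, hb, hx⟩ := mem_coset.1 hx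
  obtain ⟨s, hs, hy⟩ := BR.exists_N_pos_assoc.1 ⟨x, hx, h⟩
  exact mem_coset.2 ⟨s, hA.mul_mem hb ha hs, hy⟩

lemma mem_coset_symm (hA : BR.IsBasedSubring A) {j x : ι} (hx : x ∈ BR.coset A j) :
    j ∈ BR.coset A x := by
  obtain ⟨a, ha, h⟩ := mem_coset.1 hx
  exact mem_coset.2 ⟨_, hA.star_mem ha, by rwa [N_frobenius_right] at h⟩

lemma coset_eq_of_mem (hA : BR.IsBasedSubring A) {j x : ι} (hx : x ∈ BR.coset A j) :
    BR.coset A x = BR.coset A j := by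
  have key : ∀ {j x}, x ∈ BR.coset A j → BR.coset A x ⊆ BR.coset A j := fun hx y hy => by
    obtain ⟨a, ha, h⟩ := mem_coset.1 hy
    exact mem_coset_of_N_pos hA hx ha h
  exact Subset.antisymm (key hx) (key (mem_coset_symm hA hx))

lemma mem_coset_adOf_of_N_pos_of_N_pos (hC : BR.IsBasedSubring C) {p w x y : ι} (hw : w ∈ C)
    (hx : 0 < BR.N p w x) (hy : 0 < BR.N p w y) : y ∈ BR.coset (BR.adOf C) x := by
  rw [N_frobenius_right] at hx
  obtain ⟨s, hs, hy⟩ := BR.exists_N_pos_assoc.1 ⟨p, hx, hy⟩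
  refine mem_coset.2 ⟨s, mem_adOf_of_N_pos (hC.star_mem hw) ?_, hy⟩
  rwa [BR.star_invol]

lemma mem_coset_adOf_of_mem_adOf (hC : BR.IsBasedSubring C) {a c q : ι} (ha : a ∈ BR.adOf C)
    (hc : c ∈ C) (h : 0 < BR.N a c q) : q ∈ BR.coset (BR.adOf C) c := by
  revert c q
  refine adOf_induction
    (P := fun a => ∀ {c q}, c ∈ C → 0 < BR.N a c q → q ∈ BR.coset (BR.adOf C) c) ?_ ?_ ha
  · intro w hw a hwa c q hc h
    -- `q` and `c` both occur in `X_w X_v` for some `v` in `X_{w*} X_c`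
    obtain ⟨v, hv, hq⟩ := BR.exists_N_pos_assoc.1 ⟨a, hwa, h⟩
    have hvC : v ∈ C := hC.mul_mem (hC.star_mem hw) hc hv
    rw [N_frobenius_left, BR.star_invol] at hv
    exact mem_coset_adOf_of_N_pos_of_N_pos hC hvC hv hq
  · intro a b k ha hb hab c q hc h
    obtain ⟨r, hr, hq⟩ := BR.exists_N_pos_assoc.1 ⟨k, hab, h⟩
    obtain ⟨p, hp, hcpr⟩ := mem_coset.1 (hb hc hr)
    obtain ⟨t, htc, htq⟩ := BR.exists_N_pos_assoc.2 ⟨r, hcpr, hq⟩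
    exact mem_coset_of_N_pos hC.adOf (ha hc htc) hp htq

lemma mem_coset_adOf_of_mem_coset_adOf (hC : BR.IsBasedSubring C) {c j j' m y : ι} (hc : c ∈ C)
    (hj' : 0 < BR.N j c j') (hm : m ∈ BR.coset (BR.adOf C) j) (hy : 0 < BR.N m c y) :
    y ∈ BR.coset (BR.adOf C) j' := by
  obtain ⟨a, ha, hjam⟩ := mem_coset.1 hm
  obtain ⟨q, haq, hjqy⟩ := BR.exists_N_pos_assoc.1 ⟨m, hjam, hy⟩
  obtain ⟨p, hp, hcpq⟩ := mem_coset.1 (mem_coset_adOf_of_mem_adOf hC ha hc haq)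
  obtain ⟨z, hjcz, hzpy⟩ := BR.exists_N_pos_assoc.2 ⟨q, hcpq, hjqy⟩
  exact mem_coset_of_N_pos hC.adOf (mem_coset_adOf_of_N_pos_of_N_pos hC hc hj' hjcz) hp hzpy

lemma filter_coset_eq_coset_adOf (hC : BR.IsBasedSubring C) {j x : ι} (hx : x ∈ BR.coset C j) :
    (BR.coset C j).filter (fun y => BR.coset (BR.adOf C) y = BR.coset (BR.adOf C) x)
      = BR.coset (BR.adOf C) x := by
  ext y
  rw [mem_filter]
  refine ⟨fun ⟨_, hyx⟩ => hyx ▸ self_mem_coset hC.adOf.unit_mem y, fun hy => ⟨?_, ?_⟩⟩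
  · obtain ⟨a, ha, h⟩ := mem_coset.1 hy
    exact mem_coset_of_N_pos hC hx (adOf_subset hC ha) h
  · exact coset_eq_of_mem hC.adOf hy

end coset

section fpdim

variable (f : R →+* ℝ)

lemma fpdim_mul_eq_sum (i j : ι) :
    f (BR.b i) * f (BR.b j) = ∑ k, (BR.N i j k : ℝ) * f (BR.b k) := by
  rw [← map_mul]
  conv_lhs => rw [← BR.b.sum_repr (BR.b i * BR.b j)]
  simp only [map_sum, zsmul_eq_mul, map_mul, map_intCast, N]

lemma sum_N_mul_fpdim_eq {S : Finset ι} {i j : ι} (hS : ∀ k, 0 < BR.N i j k → k ∈ S) :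
    ∑ k ∈ S, (BR.N i j k : ℝ) * f (BR.b k) = f (BR.b i) * f (BR.b j) := by
  rw [BR.fpdim_mul_eq_sum f]
  refine sum_subset (subset_univ S) fun k _ hk => ?_
  rw [← (BR.N_nonneg i j k).eq_of_not_lt (mt (hS k) hk), Int.cast_zero, zero_mul]

lemma fpdim_mul_sum_sq_eq {O O' : Finset ι} {c : ι}
    (h : ∀ m ∈ O, ∀ m', 0 < BR.N m c m' → m' ∈ O')
    (h' : ∀ m' ∈ O', ∀ m, 0 < BR.N m' (BR.star c) m → m ∈ O) :
    f (BR.b c) * ∑ m ∈ O, f (BR.b m) ^ 2 =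
      f (BR.b (BR.star c)) * ∑ m' ∈ O', f (BR.b m') ^ 2 :=
  calc f (BR.b c) * ∑ m ∈ O, f (BR.b m) ^ 2
      = ∑ m ∈ O, ∑ m' ∈ O', f (BR.b m) * BR.N m c m' * f (BR.b m') := by
        rw [mul_sum]
        refine sum_congr rfl fun m hm => ?_
        simp only [mul_assoc, ← mul_sum, BR.sum_N_mul_fpdim_eq f (h m hm)]
        ring
    _ = ∑ m' ∈ O', ∑ m ∈ O, f (BR.b m') * BR.N m' (BR.star c) m * f (BR.b m) := by
        rw [sum_comm]
        refine sum_congr rfl fun m' _ => sum_congr rfl fun m _ => ?_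
        rw [N_frobenius_right]
        ring
    _ = f (BR.b (BR.star c)) * ∑ m' ∈ O', f (BR.b m') ^ 2 := by
        rw [mul_sum]
        refine sum_congr rfl fun m' hm' => ?_
        simp only [mul_assoc, ← mul_sum, BR.sum_N_mul_fpdim_eq f (h' m' hm')]
        ring

variable {f} (hf : ∀ i, 0 < f (BR.b i))
include hf

lemma fpdim_star (c : ι) : f (BR.b (BR.star c)) = f (BR.b c) := by
  have hpos : 0 < ∑ m, f (BR.b m) ^ 2 :=
    sum_pos (fun m _ => pow_pos (hf m) 2) ⟨BR.unit, mem_univ _⟩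
  have := BR.fpdim_mul_sum_sq_eq f (O := univ) (O' := univ) (c := c)
    (fun _ _ _ _ => mem_univ _) (fun _ _ _ _ => mem_univ _)
  exact (mul_right_cancel₀ hpos.ne' this).symm

lemma sum_sq_fpdim_eq_of_forall {O O' : Finset ι} {c : ι}
    (h : ∀ m ∈ O, ∀ m', 0 < BR.N m c m' → m' ∈ O')
    (h' : ∀ m' ∈ O', ∀ m, 0 < BR.N m' (BR.star c) m → m ∈ O) :
    ∑ m ∈ O, f (BR.b m) ^ 2 = ∑ m' ∈ O', f (BR.b m') ^ 2 := by
  have := BR.fpdim_mul_sum_sq_eq f h h'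
  rw [BR.fpdim_star hf] at this
  exact mul_left_cancel₀ (hf c).ne' this

variable {BR} {C : Finset ι}

lemma sum_sq_fpdim_coset_adOf_eq (hC : BR.IsBasedSubring C) {c j j' : ι} (hc : c ∈ C)
    (h : 0 < BR.N j c j') :
    ∑ k ∈ BR.coset (BR.adOf C) j, f (BR.b k) ^ 2 =
      ∑ k ∈ BR.coset (BR.adOf C) j', f (BR.b k) ^ 2 :=
  BR.sum_sq_fpdim_eq_of_forall hf
    (fun _ hm _ hy => mem_coset_adOf_of_mem_coset_adOf hC hc h hm hy)
    (fun _ hm _ hy => mem_coset_adOf_of_mem_coset_adOf hC (hC.star_mem hc)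
      (by rwa [N_frobenius_right] at h) hm hy)

theorem exists_sum_sq_fpdim_coset_eq_mul (n : ℕ) (hC : BR.IsBasedSubring C)
    (hnil : BR.upperOf C n = {BR.unit}) (j : ι) :
    ∃ m : ℕ, ∑ k ∈ BR.coset C j, f (BR.b k) ^ 2 = m * f (BR.b j) ^ 2 := by
  induction n generalizing C with
  | zero =>
    refine ⟨1, ?_⟩
    rw [show C = {BR.unit} from hnil, coset_singleton_unit, sum_singleton, Nat.cast_one, one_mul]
  | succ n ih =>
    rw [upperOf_succ'] at hnil
    obtain ⟨m, hm⟩ := ih hC.adOf hnil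
    refine ⟨#((BR.coset C j).image (BR.coset (BR.adOf C))) * m, ?_⟩
    calc ∑ k ∈ BR.coset C j, f (BR.b k) ^ 2
        = ∑ _O ∈ (BR.coset C j).image (BR.coset (BR.adOf C)), (m * f (BR.b j) ^ 2) := by
          refine (sum_image' _ fun x hx => ?_).symm
          -- the fibre over `coset (adOf C) x` is that coset, which has the same mass as that of `j`
          obtain ⟨c, hc, hjcx⟩ := mem_coset.1 hx
          rw [filter_coset_eq_coset_adOf hC hx, ← sum_sq_fpdim_coset_adOf_eq hf hC hc hjcx, hm]
      _ = _ := by rw [sum_const, nsmul_eq_mul]; push_cast; ring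

end fpdim

end BasedRing

/-- Let `R` be a nilpotent based ring and `f = FPdim : R → ℝ` the
ring homomorphism positive on basic elements. Then for every basic element `X`
of `R`, the ratio `FPdim(R_ad)/FPdim(X)²` is an integer, where
`FPdim(R_ad) = Σ FPdim(Y)²`, the sum being over the basic elements `Y` lying in
`R_ad`. -/
theorem fpdim_sq_dvd_fpdim_ad {ι R : Type*} [Fintype ι] [DecidableEq ι]
    [Ring R] (BR : BasedRing ι R)
    (hnil : ∃ n : ℕ, BR.upperOf Finset.univ n = {BR.unit})
    (f : R →+* ℝ) (hf : ∀ i, 0 < f (BR.b i)) :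
    ∀ i : ι, ∃ m : ℤ,
      (∑ k ∈ BR.adOf Finset.univ, (f (BR.b k)) ^ 2) = (m : ℝ) * (f (BR.b i)) ^ 2 := by
  intro i
  obtain ⟨n, hn⟩ := hnil
  have hnil_ad : BR.upperOf (BR.adOf Finset.univ) n = {BR.unit} := by
    rw [← BR.upperOf_succ', BasedRing.upperOf, hn, BR.adOf_singleton_unit]
  obtain ⟨m, hm⟩ := BasedRing.exists_sum_sq_fpdim_coset_eq_mul hf n
    BR.isBasedSubring_univ.adOf hnil_ad i
  have h1i : 0 < BR.N BR.unit i i := BR.N_unit_left_pos_iff.2 rfl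
  refine ⟨m, ?_⟩
  rw [← BR.coset_unit (BR.adOf Finset.univ),
    BasedRing.sum_sq_fpdim_coset_adOf_eq hf BR.isBasedSubring_univ (Finset.mem_univ i) h1i, hm,
    Int.cast_natCast]
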